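/- Let p_i denote the i-th prime and define W(V) = p_V · ∏_{i=3}^{V-1} (p_{i+1} - 3)/p_i as a rational number for V ≥ 4. Then W(V) > 3 for all V ≥ 4, and W is strictly increasing in V. -/
import Mathlib


/-- `nthPrime i` is the i-th prime, with `nthPrime 1 = 2`, `nthPrime 2 = 3`, `nthPrime 3 = 5`, ... -/
noncomputable def nthPrime (i : ℕ) : ℕ := Nat.nth Nat.Prime (i - 1)

/-- `W V = p_V · ∏_{i=3}^{V-1} (p_{i+1} - 3)/p_i` as a rational number. -/
noncomputable def W (V : ℕ) : ℚ :=
  (nthPrime V : ℚ) * ∏ i ∈ Finset.Icc 3 (V - 1), ((nthPrime (i + 1) : ℚ) - 3) / (nthPrime i : ℚ)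

lemma nthPrime_prime (i : ℕ) : (nthPrime i).Prime :=
  Nat.nth_mem_of_infinite Nat.infinite_setOf_prime _

lemma nthPrime_lt_nthPrime {m n : ℕ} (h1 : 1 ≤ m) (h : m < n) : nthPrime m < nthPrime n := by
  unfold nthPrime
  exact (Nat.nth_lt_nth Nat.infinite_setOf_prime).2 (by omega)

lemma nthPrime_three : nthPrime 3 = 5 := by
  have : Nat.count Nat.Prime 5 = 2 := by decide
  have h := Nat.nth_count (p := Nat.Prime) (n := 5) (by norm_num)
  rw [this] at h
  simpa [nthPrime] using h

lemma nthPrime_four : nthPrime 4 = 7 := by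
  have : Nat.count Nat.Prime 7 = 3 := by decide
  have h := Nat.nth_count (p := Nat.Prime) (n := 7) (by norm_num)
  rw [this] at h
  simpa [nthPrime] using h

lemma nthPrime_ge_seven {i : ℕ} (h : 4 ≤ i) : 7 ≤ nthPrime i := by
  rcases eq_or_lt_of_le h with rfl | h'
  · exact nthPrime_four.ge
  · have := nthPrime_lt_nthPrime (by norm_num : (1:ℕ) ≤ 4) h'
    rw [nthPrime_four] at this; omega
    
lemma nthPrime_ge_five {i : ℕ} (h : 3 ≤ i) : 5 ≤ nthPrime i := by
  rcases eq_or_lt_of_le h with rfl | h'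
  · exact nthPrime_three.ge
  · have := nthPrime_lt_nthPrime (by norm_num : (1:ℕ) ≤ 3) h'
    rw [nthPrime_three] at this; omega

lemma prod_pos (V : ℕ) :
    0 < ∏ i ∈ Finset.Icc 3 (V - 1), ((nthPrime (i + 1) : ℚ) - 3) / (nthPrime i : ℚ) := by
  apply Finset.prod_pos
  intro i hi
  have hi3 : 3 ≤ i := (Finset.mem_Icc.1 hi).1
  have h1 : 7 ≤ nthPrime (i + 1) := nthPrime_ge_seven (by omega)
  have h2 : 5 ≤ nthPrime i := nthPrime_ge_five hi3
  have h1' : (7 : ℚ) ≤ (nthPrime (i+1) : ℚ) := by exact_mod_cast h1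
  have h2' : (5 : ℚ) ≤ (nthPrime i : ℚ) := by exact_mod_cast h2
  exact div_pos (by linarith) (by linarith)

lemma gap {V : ℕ} (h : 4 ≤ V) : nthPrime V + 2 ≤ nthPrime (V + 1) := by
  have hlt : nthPrime V < nthPrime (V + 1) := nthPrime_lt_nthPrime (by omega) (by omega)
  have h7 : 7 ≤ nthPrime V := nthPrime_ge_seven h
  have ho1 : Odd (nthPrime V) := (nthPrime_prime V).odd_of_ne_two (by omega)
  have ho2 : Odd (nthPrime (V + 1)) := (nthPrime_prime (V+1)).odd_of_ne_two (by omega)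
  obtain ⟨a, ha⟩ := ho1
  obtain ⟨b, hb⟩ := ho2
  omega

lemma W_step {V : ℕ} (h : 4 ≤ V) : W V < W (V + 1) := by
  set f : ℕ → ℚ := fun i => ((nthPrime (i + 1) : ℚ) - 3) / (nthPrime i : ℚ) with hf
  have hP : 0 < ∏ i ∈ Finset.Icc 3 (V - 1), f i := prod_pos V
  have hVsub : V + 1 - 1 = (V - 1) + 1 := by omega
  have hsplit : ∏ i ∈ Finset.Icc 3 (V + 1 - 1), f i
      = (∏ i ∈ Finset.Icc 3 (V - 1), f i) * f ((V - 1) + 1) := by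
    rw [hVsub]; exact Finset.prod_Icc_succ_top (by omega) f
  have hV1 : (V - 1) + 1 = V := by omega
  have ha7 : 7 ≤ nthPrime V := nthPrime_ge_seven h
  have hgap := gap h
  have ha : (7 : ℚ) ≤ (nthPrime V : ℚ) := by exact_mod_cast ha7
  have hb : (nthPrime V : ℚ) + 2 ≤ (nthPrime (V + 1) : ℚ) := by exact_mod_cast hgap
  have hapos : (0 : ℚ) < (nthPrime V : ℚ) := by linarith
  have key : (nthPrime V : ℚ) < (nthPrime (V + 1) : ℚ) * ((nthPrime (V + 1) : ℚ) - 3) / (nthPrime V : ℚ) := by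
    rw [lt_div_iff₀ hapos]
    nlinarith
  have : W (V + 1) = ((nthPrime (V + 1) : ℚ) * ((nthPrime (V + 1) : ℚ) - 3) / (nthPrime V : ℚ)) * ∏ i ∈ Finset.Icc 3 (V - 1), f i := by
    unfold W
    rw [hsplit, hV1, hf]
    ring
  rw [this]
  have hWV : W V = (nthPrime V : ℚ) * ∏ i ∈ Finset.Icc 3 (V - 1), f i := rfl
  rw [hWV]
  exact mul_lt_mul_of_pos_right key hP

lemma W_mono : ∀ V V', 4 ≤ V → V < V' → W V < W V' := by
  intro V V' hV hlt
  induction V' with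
  | zero => omega
  | succ n ih =>
    rcases eq_or_lt_of_le (Nat.lt_succ_iff.1 hlt) with rfl | h'
    · exact W_step hV
    · exact (ih h').trans (W_step (by omega))

lemma W_four : W 4 = 28 / 5 := by
  unfold W
  rw [show (4 : ℕ) - 1 = 3 from rfl, Finset.Icc_self, Finset.prod_singleton,
    nthPrime_three, nthPrime_four]
  norm_num

theorem stmt_14 :
    (∀ V, 4 ≤ V → 3 < W V) ∧ (∀ V V', 4 ≤ V → V < V' → W V < W V') := by
  constructor
  · intro V hV
    have h4 : (3 : ℚ) < W 4 := by rw [W_four]; norm_num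
    rcases eq_or_lt_of_le hV with rfl | h'
    · exact h4
    · exact h4.trans (W_mono 4 V le_rfl h')
  · exact W_mono
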